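/- Let D ∈ Mat(2n×2n,ℝ) satisfy D·J = J·D, and let V := {C ∈ Mat(2n×2n,ℝ) : C·J + J·C = 0}. Then V is invariant under both right multiplication C ↦ C·D and left multiplication C ↦ D·C, and each of these linear endomorphisms of V has trace equal to n·Tr(D). -/

import Mathlib

open Matrix

/-- The standard complex structure matrix `J = [[0, -Id_n],[Id_n, 0]]`. -/
noncomputable def Jmat (n : ℕ) : Matrix (Fin n ⊕ Fin n) (Fin n ⊕ Fin n) ℝ :=
  Matrix.fromBlocks 0 (-1) 1 0

/-- The subspace `V = {C : C·J + J·C = 0}` of `2n×2n` real matrices. -/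
noncomputable def Vsub (n : ℕ) : Submodule ℝ (Matrix (Fin n ⊕ Fin n) (Fin n ⊕ Fin n) ℝ) where
  carrier := {C | C * Jmat n + Jmat n * C = 0}
  add_mem' := by
    intro a b ha hb
    simp only [Set.mem_setOf_eq] at *
    rw [add_mul, mul_add]
    calc a * Jmat n + b * Jmat n + (Jmat n * a + Jmat n * b)
        = (a * Jmat n + Jmat n * a) + (b * Jmat n + Jmat n * b) := by abel
      _ = 0 := by rw [ha, hb]; simp
  zero_mem' := by simp
  smul_mem' := by
    intro c x hx
    simp only [Set.mem_setOf_eq] at *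
    rw [Matrix.smul_mul, Matrix.mul_smul, ← smul_add, hx, smul_zero]

/- ### Auxiliary material -/

lemma Jmat_sq (n : ℕ) : Jmat n * Jmat n = -1 := by
  have h : (-1 : Matrix (Fin n ⊕ Fin n) (Fin n ⊕ Fin n) ℝ) = Matrix.fromBlocks (-1) 0 0 (-1) := by
    rw [← Matrix.fromBlocks_one, Matrix.fromBlocks_neg]; simp
  rw [h]
  simp [Jmat, Matrix.fromBlocks_multiply]

lemma Jmat_trace (n : ℕ) : (Jmat n).trace = 0 := by
  simp [Jmat, Matrix.trace, Matrix.diag, Fintype.sum_sum_type]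

/-- The trace of `C ↦ A * C * B` on the full matrix space is `tr A * tr B`. -/
lemma trace_mulLeft_comp_mulRight {m : Type*} [Fintype m] [DecidableEq m] {R : Type*} [CommRing R]
    (A B : Matrix m m R) :
    LinearMap.trace R (Matrix m m R)
      (LinearMap.mulLeft R A ∘ₗ LinearMap.mulRight R B) = A.trace * B.trace := by
  rw [LinearMap.trace_eq_matrix_trace R (Matrix.stdBasis R m m)]
  rw [Matrix.trace]
  have h : ∀ p : m × m, (LinearMap.toMatrix (Matrix.stdBasis R m m) (Matrix.stdBasis R m m)
      (LinearMap.mulLeft R A ∘ₗ LinearMap.mulRight R B)).diag p = A p.1 p.1 * B p.2 p.2 := by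
    intro p
    rw [Matrix.diag, LinearMap.toMatrix_apply]
    have hrep : (Matrix.stdBasis R m m).repr
        (A * (Matrix.stdBasis R m m) p * B) p = (A * (Matrix.stdBasis R m m) p * B) p.1 p.2 := by
      simp [Matrix.stdBasis]
    simp only [LinearMap.coe_comp, Function.comp_apply, LinearMap.mulRight_apply,
      LinearMap.mulLeft_apply, ← mul_assoc, hrep]
    rw [Matrix.stdBasis_eq_single, Matrix.mul_assoc, Matrix.mul_apply]
    rw [Finset.sum_eq_single p.1 (by
      intro b _ hb
      rw [Matrix.single_mul_apply_of_ne 1 p.1 p.2 b p.2 hb B]; ring) (by simp)]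
    rw [Matrix.single_mul_apply_same, one_mul]
  rw [Finset.sum_congr rfl (fun p _ => h p)]
  rw [Matrix.trace, Matrix.trace, Finset.sum_mul_sum, ← Finset.sum_product']
  simp [Matrix.diag]

/-- The commutant subspace `W = {C : C·J = J·C}`. -/
noncomputable def Wsub (n : ℕ) : Submodule ℝ (Matrix (Fin n ⊕ Fin n) (Fin n ⊕ Fin n) ℝ) where
  carrier := {C | C * Jmat n = Jmat n * C}
  add_mem' := by
    intro a b ha hb
    simp only [Set.mem_setOf_eq] at *
    rw [add_mul, mul_add, ha, hb]
  zero_mem' := by simp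
  smul_mem' := by
    intro c x hx
    simp only [Set.mem_setOf_eq] at *
    rw [Matrix.smul_mul, Matrix.mul_smul, hx]

lemma mem_Wsub_iff {n : ℕ} {C : Matrix (Fin n ⊕ Fin n) (Fin n ⊕ Fin n) ℝ} :
    C ∈ Wsub n ↔ C * Jmat n = Jmat n * C := Iff.rfl

lemma mem_Vsub_iff {n : ℕ} {C : Matrix (Fin n ⊕ Fin n) (Fin n ⊕ Fin n) ℝ} :
    C ∈ Vsub n ↔ C * Jmat n + Jmat n * C = 0 := Iff.rfl

lemma sigma_fix {n : ℕ} {A : Matrix (Fin n ⊕ Fin n) (Fin n ⊕ Fin n) ℝ} (hA : A ∈ Wsub n) :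
    -(Jmat n * A * Jmat n) = A := by
  rw [mem_Wsub_iff] at hA
  rw [← hA, mul_assoc, Jmat_sq]
  simp

lemma sigma_neg {n : ℕ} {A : Matrix (Fin n ⊕ Fin n) (Fin n ⊕ Fin n) ℝ} (hA : A ∈ Vsub n) :
    -(Jmat n * A * Jmat n) = -A := by
  rw [mem_Vsub_iff] at hA
  have h : Jmat n * A = -(A * Jmat n) := eq_neg_of_add_eq_zero_right hA
  rw [h, neg_mul, mul_assoc, Jmat_sq]
  simp

lemma isCompl_WV (n : ℕ) : IsCompl (Wsub n) (Vsub n) := by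
  constructor
  · rw [Submodule.disjoint_def]
    intro C hW hV
    rw [mem_Wsub_iff] at hW
    rw [mem_Vsub_iff] at hV
    have h2 : (2 : ℝ) • (C * Jmat n) = 0 := by
      rw [two_smul]
      nth_rewrite 2 [hW]
      exact hV
    have h3 : C * Jmat n = 0 := by
      rcases smul_eq_zero.mp h2 with h | h
      · norm_num at h
      · exact h
    have h4 : C * Jmat n * Jmat n = 0 := by rw [h3, Matrix.zero_mul]
    rw [mul_assoc, Jmat_sq] at h4
    simpa using h4
  · rw [codisjoint_iff, eq_top_iff]
    intro C _
    have hdecomp : C = ((1:ℝ)/2) • (C - Jmat n * C * Jmat n)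
        + ((1:ℝ)/2) • (C + Jmat n * C * Jmat n) := by module
    rw [hdecomp]
    refine Submodule.add_mem_sup (Submodule.smul_mem _ _ ?_) (Submodule.smul_mem _ _ ?_)
    all_goals
      have h1 : Jmat n * (Jmat n * C * Jmat n) = -(C * Jmat n) := by
        rw [← mul_assoc, ← mul_assoc, Jmat_sq]; simp
      have h2 : Jmat n * C * Jmat n * Jmat n = -(Jmat n * C) := by
        rw [mul_assoc (Jmat n * C), Jmat_sq]; simp
    · rw [mem_Wsub_iff, sub_mul, mul_sub, h1, h2]
      abel
    · rw [mem_Vsub_iff, add_mul, mul_add, h1, h2]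
      abel

/-- The `Bool`-indexed family `{W, V}`. -/
noncomputable def NWV (n : ℕ) : Bool → Submodule ℝ (Matrix (Fin n ⊕ Fin n) (Fin n ⊕ Fin n) ℝ) :=
  fun b => cond b (Wsub n) (Vsub n)

lemma isInternal_NWV (n : ℕ) : DirectSum.IsInternal (NWV n) := by
  rw [DirectSum.isInternal_submodule_iff_isCompl (NWV n) (i := true) (j := false)
    (by simp) (by ext b; cases b <;> simp)]
  exact isCompl_WV n

/-- The key abstract computation: for an endomorphism `f` preserving both `W` and `V`,
with `g = σ ∘ f` where `σ(C) = -J C J`, the trace of `f` on `V` is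
`(trace f - trace g)/2`. -/
lemma trace_restrict_V_eq {n : ℕ}
    (f : Module.End ℝ (Matrix (Fin n ⊕ Fin n) (Fin n ⊕ Fin n) ℝ))
    (hfW : ∀ C ∈ Wsub n, f C ∈ Wsub n) (hfV : ∀ C ∈ Vsub n, f C ∈ Vsub n)
    (g : Module.End ℝ (Matrix (Fin n ⊕ Fin n) (Fin n ⊕ Fin n) ℝ))
    (hg : ∀ C, g C = -(Jmat n * f C * Jmat n)) :
    LinearMap.trace ℝ ↥(Vsub n) (f.restrict hfV)
      = (LinearMap.trace ℝ _ f - LinearMap.trace ℝ _ g) / 2 := by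
  have hfN : ∀ i, Set.MapsTo f (NWV n i) (NWV n i) := by
    intro i
    cases i
    · exact hfV
    · exact hfW
  have hgN : ∀ i, Set.MapsTo g (NWV n i) (NWV n i) := by
    intro i x hx
    cases i
    · show g x ∈ Vsub n
      rw [hg]
      have := sigma_neg (hfV x hx)
      rw [this]
      exact Submodule.neg_mem _ (hfV x hx)
    · show g x ∈ Wsub n
      rw [hg, sigma_fix (hfW x hx)]
      exact hfW x hx
  have htf := LinearMap.trace_eq_sum_trace_restrict (isInternal_NWV n) hfN
  have htg := LinearMap.trace_eq_sum_trace_restrict (isInternal_NWV n) hgN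
  rw [Fintype.sum_bool] at htf htg
  have hgW : g.restrict (hgN true) = f.restrict (hfN true) := by
    ext x
    have : g x.1 = f x.1 := by rw [hg, sigma_fix (hfW x.1 x.2)]
    exact congrFun (congrFun this _) _
  have hgV : g.restrict (hgN false) = (-1 : ℝ) • (f.restrict (hfN false)) := by
    ext x
    have : g x.1 = -(f x.1) := by rw [hg, sigma_neg (hfV x.1 x.2)]
    show g x.1 _ _ = ((-1 : ℝ) • f x.1) _ _
    simp [this]
  rw [hgW, hgV, _root_.map_smul, smul_eq_mul] at htg
  have heq : LinearMap.trace ℝ ↥(Vsub n) (f.restrict hfV)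
      = LinearMap.trace ℝ ↥(NWV n false) (f.restrict (hfN false)) := rfl
  rw [heq]
  linarith

lemma trace_one_matrix (n : ℕ) :
    (1 : Matrix (Fin n ⊕ Fin n) (Fin n ⊕ Fin n) ℝ).trace = (2 * n : ℝ) := by
  rw [Matrix.trace_one]
  simp [Fintype.card_sum]
  ring

theorem trace_mul_on_V (n : ℕ) (hn : 0 < n)
    (D : Matrix (Fin n ⊕ Fin n) (Fin n ⊕ Fin n) ℝ) (hD : D * Jmat n = Jmat n * D) :
    ∃ (h₁ : ∀ C ∈ Vsub n, (LinearMap.mulRight ℝ D) C ∈ Vsub n)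
      (h₂ : ∀ C ∈ Vsub n, (LinearMap.mulLeft ℝ D) C ∈ Vsub n),
      LinearMap.trace ℝ ↥(Vsub n) ((LinearMap.mulRight ℝ D).restrict h₁) =
        (n : ℝ) * Matrix.trace D ∧
      LinearMap.trace ℝ ↥(Vsub n) ((LinearMap.mulLeft ℝ D).restrict h₂) =
        (n : ℝ) * Matrix.trace D := by
  have hVright : ∀ C ∈ Vsub n, (LinearMap.mulRight ℝ D) C ∈ Vsub n := by
    intro C hC
    rw [mem_Vsub_iff] at hC ⊢
    show C * D * Jmat n + Jmat n * (C * D) = 0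
    rw [mul_assoc C D, hD, ← mul_assoc, ← mul_assoc, ← add_mul, hC, Matrix.zero_mul]
  have hWright : ∀ C ∈ Wsub n, (LinearMap.mulRight ℝ D) C ∈ Wsub n := by
    intro C hC
    rw [mem_Wsub_iff] at hC ⊢
    show C * D * Jmat n = Jmat n * (C * D)
    rw [mul_assoc C D, hD, ← mul_assoc, hC, mul_assoc]
  have hVleft : ∀ C ∈ Vsub n, (LinearMap.mulLeft ℝ D) C ∈ Vsub n := by
    intro C hC
    rw [mem_Vsub_iff] at hC ⊢
    show D * C * Jmat n + Jmat n * (D * C) = 0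
    rw [← mul_assoc (Jmat n) D C, ← hD, mul_assoc D C, mul_assoc D (Jmat n), ← mul_add, hC,
      Matrix.mul_zero]
  have hWleft : ∀ C ∈ Wsub n, (LinearMap.mulLeft ℝ D) C ∈ Wsub n := by
    intro C hC
    rw [mem_Wsub_iff] at hC ⊢
    show D * C * Jmat n = Jmat n * (D * C)
    rw [mul_assoc, hC, ← mul_assoc, hD, mul_assoc]
  refine ⟨hVright, hVleft, ?_, ?_⟩
  · -- right multiplication
    set g : Module.End ℝ (Matrix (Fin n ⊕ Fin n) (Fin n ⊕ Fin n) ℝ) :=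
      -(LinearMap.mulLeft ℝ (Jmat n) ∘ₗ LinearMap.mulRight ℝ (D * Jmat n)) with hgdef
    have hg : ∀ C, g C = -(Jmat n * (LinearMap.mulRight ℝ D) C * Jmat n) := by
      intro C
      simp [hgdef, mul_assoc]
    rw [trace_restrict_V_eq (LinearMap.mulRight ℝ D) hWright hVright g hg]
    have h1 : LinearMap.trace ℝ _ (LinearMap.mulRight ℝ D) = (2 * n : ℝ) * D.trace := by
      have h := trace_mulLeft_comp_mulRight (1 : Matrix (Fin n ⊕ Fin n) (Fin n ⊕ Fin n) ℝ) D
      rw [LinearMap.mulLeft_one, LinearMap.id_comp, trace_one_matrix] at h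
      exact h
    have h2 : LinearMap.trace ℝ _ g = 0 := by
      rw [hgdef, map_neg, trace_mulLeft_comp_mulRight, Jmat_trace, zero_mul, neg_zero]
    rw [h1, h2]
    ring
  · -- left multiplication
    set g : Module.End ℝ (Matrix (Fin n ⊕ Fin n) (Fin n ⊕ Fin n) ℝ) :=
      -(LinearMap.mulLeft ℝ (Jmat n * D) ∘ₗ LinearMap.mulRight ℝ (Jmat n)) with hgdef
    have hg : ∀ C, g C = -(Jmat n * (LinearMap.mulLeft ℝ D) C * Jmat n) := by
      intro C
      simp [hgdef, mul_assoc]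
    rw [trace_restrict_V_eq (LinearMap.mulLeft ℝ D) hWleft hVleft g hg]
    have h1 : LinearMap.trace ℝ _ (LinearMap.mulLeft ℝ D) = D.trace * (2 * n : ℝ) := by
      have h := trace_mulLeft_comp_mulRight D (1 : Matrix (Fin n ⊕ Fin n) (Fin n ⊕ Fin n) ℝ)
      rw [LinearMap.mulRight_one, LinearMap.comp_id, trace_one_matrix] at h
      exact h
    have h2 : LinearMap.trace ℝ _ g = 0 := by
      rw [hgdef, map_neg, trace_mulLeft_comp_mulRight, Jmat_trace, mul_zero, neg_zero]
    rw [h1, h2]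
    ring
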